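/- arXiv:0707.3268 — 4 statements merged into one kernel-verified Lean document; each statement's English description precedes it below -/
import Mathlib

section
/- Let A be a commutative ring and let f be a formal power series in one variable over A with constant coefficient 1, f = ∑_{k≥0} f_k X^k with f_0 = 1. Fix a natural number n. In the ring A[y][[u]] of formal power series in u with coefficients polynomials in y, write f(c·u) := ∑_{k≥0} f_k c^k u^k for any c ∈ A[y], and consider the difference D := (∏_{j=0}^{n} f((y − j)·u)) − f(y·u)^{n+1}. Then for every k ≥ 0, the coefficient of u^k in D is a polynomial in y which is either zero or has degree strictly less than k; in particular the coefficient of u^0 in D is zero. -/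
/-!
Expanding the `u^k`-coefficient of both products over the compositions `l` of `k`, each term of
the difference is `∏ j, (y - j) ^ l j - y ^ k` times a constant of `A`. Both polynomials are
monic of degree `∑ j, l j = k`, so their leading terms cancel.
-/

open Finset

namespace Polynomial

theorem IsMonicOfDegree.prod {ι R : Type*} [CommSemiring R] {s : Finset ι} {p : ι → R[X]}
    {d : ι → ℕ} (h : ∀ j ∈ s, IsMonicOfDegree (p j) (d j)) :
    IsMonicOfDegree (∏ j ∈ s, p j) (∑ j ∈ s, d j) := by
  classical
  induction s using Finset.induction_on with
  | empty => exact isMonicOfDegree_zero_iff.2 rfl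
  | insert j s hj ih =>
    rw [prod_insert hj, sum_insert hj]
    exact (h j (mem_insert_self j s)).mul (ih fun i hi => h i (mem_insert_of_mem hi))

theorem IsMonicOfDegree.degree_sub_lt {R : Type*} [Ring R] {p q : R[X]} {n : ℕ}
    (hp : IsMonicOfDegree p n) (hq : IsMonicOfDegree q n) : (p - q).degree < n := by
  rcases eq_or_ne n 0 with rfl | hn
  · simp [isMonicOfDegree_zero_iff.1 hp, isMonicOfDegree_zero_iff.1 hq]
  · exact degree_le_natDegree.trans_lt (by exact_mod_cast hp.natDegree_sub_lt hn hq)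

end Polynomial

namespace PowerSeries

open scoped Polynomial

variable {ι A : Type*} [CommRing A]

theorem coeff_prod_rescale_map_C [DecidableEq ι] (s : Finset ι) (c : ι → A[X])
    (f : ι → A⟦X⟧) (k : ℕ) :
    coeff k (∏ j ∈ s, rescale (c j) (map Polynomial.C (f j))) =
      ∑ l ∈ finsuppAntidiag s k,
        (∏ j ∈ s, c j ^ l j) * Polynomial.C (∏ j ∈ s, coeff (l j) (f j)) := by
  simp only [coeff_prod, coeff_rescale, coeff_map, prod_mul_distrib, map_prod]

theorem degree_coeff_prod_rescale_sub_prod_rescale_lt {s : Finset ι} {p q : ι → A[X]}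
    (hp : ∀ j ∈ s, (p j).IsMonicOfDegree 1) (hq : ∀ j ∈ s, (q j).IsMonicOfDegree 1)
    (f : ι → A⟦X⟧) (k : ℕ) :
    (coeff k (∏ j ∈ s, rescale (p j) (map Polynomial.C (f j)) -
      ∏ j ∈ s, rescale (q j) (map Polynomial.C (f j)))).degree < k := by
  classical
  rw [map_sub, coeff_prod_rescale_map_C, coeff_prod_rescale_map_C, ← sum_sub_distrib]
  refine (Polynomial.degree_sum_le _ _).trans_lt
    ((Finset.sup_lt_iff (WithBot.bot_lt_coe k)).2 fun l hl => ?_)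
  have hmonic {c : ι → A[X]} (hc : ∀ j ∈ s, (c j).IsMonicOfDegree 1) :
      (∏ j ∈ s, c j ^ l j).IsMonicOfDegree k :=
    (mem_finsuppAntidiag.1 hl).1 ▸ Polynomial.IsMonicOfDegree.prod fun j hj => by
      simpa using (hc j hj).pow (l j)
  calc _ ≤ _ + _ := by rw [← sub_mul]; exact Polynomial.degree_mul_le _ _
    _ ≤ _ + 0 := add_le_add le_rfl Polynomial.degree_C_le
    _ < k := by rw [add_zero]; exact (hmonic hp).degree_sub_lt (hmonic hq)

end PowerSeries

theorem statement0_general {A : Type*} [CommRing A] (f : PowerSeries A)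
    (n : ℕ)
    (fp : PowerSeries (Polynomial A)) (hfp : fp = PowerSeries.map Polynomial.C f)
    (D : PowerSeries (Polynomial A))
    (hD : D = (∏ j ∈ Finset.range (n + 1),
        PowerSeries.rescale (Polynomial.X - (j : Polynomial A)) fp)
      - (PowerSeries.rescale Polynomial.X fp) ^ (n + 1)) :
    (∀ k : ℕ, PowerSeries.coeff k D = 0 ∨
      (PowerSeries.coeff k D).degree < (k : ℕ)) ∧
    PowerSeries.coeff 0 D = 0 := by
  have hdeg (k : ℕ) : (PowerSeries.coeff k D).degree < k := by
    nontriviality A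
    have hpow : PowerSeries.rescale Polynomial.X fp ^ (n + 1) =
        ∏ _ ∈ range (n + 1), PowerSeries.rescale Polynomial.X fp := by
      rw [prod_const, card_range]
    rw [hD, hpow, hfp]
    refine PowerSeries.degree_coeff_prod_rescale_sub_prod_rescale_lt (fun j _ => ?_)
      (fun _ _ => Polynomial.isMonicOfDegree_X A) (fun _ => f) k
    simpa using Polynomial.isMonicOfDegree_X_sub_one (j : A)
  exact ⟨fun k => Or.inr (hdeg k),
    Polynomial.degree_eq_bot.mp (Nat.WithBot.lt_zero_iff.mp (hdeg 0))⟩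

/-- For `f ∈ A[[X]]` with constant coefficient `1` and `n : ℕ`, the
difference `D := (∏_{j=0}^{n} f((y − j)·u)) − f(y·u)^{n+1}` in `A[y][[u]]` has, for every
`k`, a `u^k`-coefficient which is zero or a polynomial in `y` of degree `< k`;
in particular its `u^0`-coefficient is zero. -/
theorem statement0 {A : Type*} [CommRing A] (f : PowerSeries A)
    (hf : PowerSeries.constantCoeff f = 1) (n : ℕ)
    (fp : PowerSeries (Polynomial A)) (hfp : fp = PowerSeries.map Polynomial.C f)
    (D : PowerSeries (Polynomial A))
    (hD : D = (∏ j ∈ Finset.range (n + 1),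
        PowerSeries.rescale (Polynomial.X - (j : Polynomial A)) fp)
      - (PowerSeries.rescale Polynomial.X fp) ^ (n + 1)) :
    (∀ k : ℕ, PowerSeries.coeff k D = 0 ∨
      (PowerSeries.coeff k D).degree < (k : ℕ)) ∧
    PowerSeries.coeff 0 D = 0 :=
  statement0_general f n fp hfp D hD
end

section
/- Let A be a commutative ℚ-algebra and let f ∈ A[[X]] be a formal power series with constant coefficient 1. Set F(X) := f(X)·f(−X). Then for every natural number n: ∑_{a=0}^{n} ((−1)^a / (a!·(n−a)!)) · [u^n]( f(−(n−a+1)·u) · f(−u)^{−1} · ∏_{w=a−n}^{a} F(w·u) ) = (−1)^n · [X^n]( f(X) · F(X)^{n+1} ). Here [u^n] denotes extraction of the coefficient of u^n, f(c·u) (resp. F(c·u)) denotes rescaling of f (resp. F) by the integer c, and f(−u)^{−1} is the multiplicative inverse of the unit power series f(−u). -/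
open Finset Polynomial
open scoped Nat

/-!
Replace the integer `a` by an indeterminate `x`: the series
`G(x, u) = f((x - n - 1) u) · f(-u)⁻¹ · ∏_{i ≤ n} F((x + i - n) u)` has coefficients in
`A[x]`, and since `x` only occurs multiplied by `u`, its `u^k`-coefficient has degree at most
`k` in `x`. So `[u^n] G` is a polynomial `H` of degree `≤ n` whose value at `a` is the `a`-th
coefficient of the sum, and the alternating sum is `(-1)^n / n!` times the `n`-th forward
difference of `H` at `0`, i.e. `(-1)^n` times the coefficient of `x^n u^n` in `G`. The diagonal
`∑ₖ ([xᵏ uᵏ] G) tᵏ` is multiplicative on such series, sends `f((x + c) u)` to `f` and the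
constant factor `f(-u)⁻¹` to `1`, so that coefficient is `[u^n] (f F^{n+1})`.
-/

namespace Polynomial

variable {R : Type*} [CommRing R]

theorem fwdDiff_iter_eval_zero_of_natDegree_le {P : R[X]} {n : ℕ} (hP : P.natDegree ≤ n) :
    (fwdDiff 1)^[n] P.eval 0 = n ! • P.coeff n := by
  rcases hP.eq_or_lt with rfl | hlt
  · rw [fwdDiff_iter_degree_eq_factorial, Pi.smul_apply, Pi.natCast_apply, smul_eq_mul,
      nsmul_eq_mul, mul_comm, leadingCoeff]
  · rw [fwdDiff_iter_eq_zero_of_degree_lt hlt, coeff_eq_zero_of_natDegree_lt hlt, smul_zero,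
      Pi.zero_apply]

theorem sum_range_alternating_div_factorial_smul_eval [Algebra ℚ R] {P : R[X]} {n : ℕ}
    (hP : P.natDegree ≤ n) :
    ∑ a ∈ range (n + 1),
        ((-1 : ℚ) ^ a / (a.factorial * (n - a).factorial) : ℚ) • P.eval (a : R)
      = (-1 : ℚ) ^ n • P.coeff n := by
  have hterm : ∀ a ∈ range (n + 1),
      ((-1 : ℚ) ^ a / (a.factorial * (n - a).factorial) : ℚ) • P.eval (a : R)
        = ((-1 : ℚ) ^ n / n !) •
            (((-1 : ℤ) ^ (n - a) * n.choose a) • P.eval (0 + a • 1)) := by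
    intro a ha
    have han : a ≤ n := Nat.lt_succ_iff.mp (mem_range.mp ha)
    rw [← Int.cast_smul_eq_zsmul ℚ, smul_smul, zero_add, nsmul_one]
    congr 1
    obtain ⟨m, rfl⟩ := Nat.exists_eq_add_of_le han
    rw [Nat.add_sub_cancel_left]
    push_cast
    rw [Nat.cast_choose ℚ (Nat.le_add_right a m), Nat.add_sub_cancel_left]
    field_simp
    rw [pow_add, mul_assoc, ← pow_add, ← two_mul, pow_mul, neg_one_sq, one_pow, mul_one]
  rw [sum_congr rfl hterm, ← smul_sum, ← fwdDiff_iter_eq_sum_shift (1 : R) P.eval,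
    fwdDiff_iter_eval_zero_of_natDegree_le hP, ← Nat.cast_smul_eq_nsmul ℚ, smul_smul,
    div_mul_cancel₀ _ (by positivity)]

end Polynomial

namespace PowerSeries

variable {R : Type*} [CommRing R]

theorem constantCoeff_rescale (a : R) (g : PowerSeries R) :
    constantCoeff (rescale a g) = constantCoeff g := by
  rw [← coeff_zero_eq_constantCoeff_apply, coeff_rescale, pow_zero, one_mul,
    coeff_zero_eq_constantCoeff_apply]

theorem constantCoeff_ringInverse_of_constantCoeff_eq_one {g : PowerSeries R}
    (hg : constantCoeff g = 1) : constantCoeff (Ring.inverse g) = 1 := by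
  have hunit : IsUnit g := by
    rw [isUnit_iff_constantCoeff, hg]
    exact isUnit_one
  simpa [hg] using congrArg constantCoeff (Ring.inverse_mul_cancel g hunit)

variable (R) in
def coeffNatDegreeLE : Submonoid (PowerSeries R[X]) where
  carrier := {g | ∀ k, (coeff k g).natDegree ≤ k}
  one_mem' k := by
    rw [coeff_one]
    split_ifs <;> simp
  mul_mem' {g h} hg hh k := by
    rw [coeff_mul]
    refine natDegree_sum_le_of_forall_le _ _ fun p hp => ?_
    rw [← mem_antidiagonal.mp hp]
    exact natDegree_mul_le.trans (add_le_add (hg p.1) (hh p.2))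

noncomputable def diagonal (g : PowerSeries R[X]) : PowerSeries R :=
  mk fun k => (coeff k g).coeff k

theorem coeff_diagonal (g : PowerSeries R[X]) (k : ℕ) :
    coeff k (diagonal g) = (coeff k g).coeff k :=
  coeff_mk _ _

theorem diagonal_one : diagonal (1 : PowerSeries R[X]) = 1 := by
  ext k
  rw [coeff_diagonal, coeff_one, coeff_one]
  split_ifs <;> simp_all

theorem diagonal_mul {g h : PowerSeries R[X]} (hg : g ∈ coeffNatDegreeLE R)
    (hh : h ∈ coeffNatDegreeLE R) : diagonal (g * h) = diagonal g * diagonal h := by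
  ext k
  rw [coeff_diagonal, coeff_mul, coeff_mul, finsetSum_coeff]
  refine sum_congr rfl fun p hp => ?_
  rw [coeff_diagonal, coeff_diagonal, ← mem_antidiagonal.mp hp,
    coeff_mul_add_eq_of_natDegree_le (hg p.1) (hh p.2)]

theorem diagonal_prod {ι : Type*} {s : Finset ι} {g : ι → PowerSeries R[X]}
    (hg : ∀ i ∈ s, g i ∈ coeffNatDegreeLE R) :
    diagonal (∏ i ∈ s, g i) = ∏ i ∈ s, diagonal (g i) := by
  classical
  induction s using Finset.induction_on with
  | empty => exact diagonal_one
  | insert a s ha ih =>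
    rw [forall_mem_insert] at hg
    rw [prod_insert ha, prod_insert ha, diagonal_mul hg.1 (prod_mem hg.2), ih hg.2]

theorem map_C_mem_coeffNatDegreeLE (w : PowerSeries R) :
    map Polynomial.C w ∈ coeffNatDegreeLE R := fun k => by
  rw [coeff_map, natDegree_C]
  exact k.zero_le

theorem diagonal_map_C (w : PowerSeries R) :
    diagonal (map Polynomial.C w) = PowerSeries.C (constantCoeff w) := by
  ext k
  rw [coeff_diagonal, coeff_map, coeff_C, Polynomial.coeff_C]
  rcases k with _ | k <;> simp

theorem rescale_X_add_C_mem_coeffNatDegreeLE (c : R) (w : PowerSeries R) :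
    rescale (Polynomial.X + Polynomial.C c) (map Polynomial.C w) ∈ coeffNatDegreeLE R :=
  fun k => by
  rw [coeff_rescale, coeff_map]
  refine (natDegree_mul_C_le _ _).trans ?_
  simpa using natDegree_pow_le_of_le k (natDegree_add_C.trans_le natDegree_X_le)

theorem diagonal_rescale_X_add_C (c : R) (w : PowerSeries R) :
    diagonal (rescale (Polynomial.X + Polynomial.C c) (map Polynomial.C w)) = w := by
  ext k
  rw [coeff_diagonal, coeff_rescale, coeff_map, Polynomial.coeff_mul_C, coeff_X_add_C_pow]
  simp

theorem map_evalRingHom_map_C (x : R) (w : PowerSeries R) :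
    map (evalRingHom x) (map Polynomial.C w) = w := by
  ext k
  simp

theorem map_evalRingHom_rescale_X_add_C (x c : R) (w : PowerSeries R) :
    map (evalRingHom x) (rescale (Polynomial.X + Polynomial.C c) (map Polynomial.C w))
      = rescale (x + c) w := by
  rw [← rescale_map, map_evalRingHom_map_C, coe_evalRingHom, eval_add, eval_X, eval_C]

theorem sum_range_alternating_div_factorial_smul_coeff_map_evalRingHom [Algebra ℚ R]
    {g : PowerSeries R[X]} (hg : g ∈ coeffNatDegreeLE R) (n : ℕ) :
    ∑ a ∈ range (n + 1), ((-1 : ℚ) ^ a / (a.factorial * (n - a).factorial) : ℚ) •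
        coeff n (map (evalRingHom (a : R)) g)
      = (-1 : ℚ) ^ n • coeff n (diagonal g) := by
  simp only [coeff_map, coe_evalRingHom, coeff_diagonal]
  exact sum_range_alternating_div_factorial_smul_eval (hg n)

end PowerSeries

open PowerSeries in
theorem statement2_general {A : Type*} [CommRing A] [Algebra ℚ A] (f : PowerSeries A)
    (hf : PowerSeries.constantCoeff f = 1) (n : ℕ)
    (F : PowerSeries A) :
    ∑ a ∈ Finset.range (n + 1),
      ((-1 : ℚ) ^ a / (a.factorial * (n - a).factorial) : ℚ) •
        (PowerSeries.coeff n
          (PowerSeries.rescale (((-(((n : ℤ) - a) + 1)) : ℤ) : A) f *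
            Ring.inverse (PowerSeries.rescale (-1) f) *
            ∏ i ∈ Finset.range (n + 1),
              PowerSeries.rescale ((((a : ℤ) - n + i) : ℤ) : A) F))
      = (-1 : ℚ) ^ n • PowerSeries.coeff n (f * F ^ (n + 1)) := by
  have hinv : constantCoeff (Ring.inverse (rescale (-1 : A) f)) = 1 :=
    constantCoeff_ringInverse_of_constantCoeff_eq_one ((constantCoeff_rescale _ f).trans hf)
  set G : PowerSeries A[X] :=
    rescale (Polynomial.X + Polynomial.C ((-(n : ℤ) - 1 : ℤ) : A)) (map Polynomial.C f) *
      map Polynomial.C (Ring.inverse (rescale (-1 : A) f)) *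
      ∏ i ∈ range (n + 1),
        rescale (Polynomial.X + Polynomial.C (((i : ℤ) - n : ℤ) : A)) (map Polynomial.C F)
  have hfactors : ∀ i ∈ range (n + 1),
      rescale (Polynomial.X + Polynomial.C (((i : ℤ) - n : ℤ) : A)) (map Polynomial.C F)
        ∈ coeffNatDegreeLE A :=
    fun i _ => rescale_X_add_C_mem_coeffNatDegreeLE _ _
  have hfv := mul_mem (rescale_X_add_C_mem_coeffNatDegreeLE ((-(n : ℤ) - 1 : ℤ) : A) f)
    (map_C_mem_coeffNatDegreeLE (Ring.inverse (rescale (-1 : A) f)))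
  have hG : G ∈ coeffNatDegreeLE A := mul_mem hfv (prod_mem hfactors)
  have heval (a : ℕ) : map (evalRingHom (a : A)) G =
      rescale (((-(((n : ℤ) - a) + 1)) : ℤ) : A) f * Ring.inverse (rescale (-1) f) *
        ∏ i ∈ range (n + 1), rescale ((((a : ℤ) - n + i) : ℤ) : A) F := by
    simp only [G, map_mul, map_prod, map_evalRingHom_rescale_X_add_C, map_evalRingHom_map_C]
    congr 2
    · exact congrArg (rescale · f) (by push_cast; ring)
    · exact funext fun i => congrArg (rescale · F) (by push_cast; ring)
  have hdiag : diagonal G = f * F ^ (n + 1) := by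
    rw [diagonal_mul hfv (prod_mem hfactors), diagonal_prod hfactors,
      diagonal_mul (rescale_X_add_C_mem_coeffNatDegreeLE _ _) (map_C_mem_coeffNatDegreeLE _),
      diagonal_map_C, hinv, map_one, mul_one]
    simp only [diagonal_rescale_X_add_C, prod_const, card_range]
  simp only [← heval]
  rw [sum_range_alternating_div_factorial_smul_coeff_map_evalRingHom hG, hdiag]

/-- for `f ∈ A[[X]]` with constant coefficient `1` and `F(X) = f(X)f(−X)`,
`∑_{a=0}^{n} ((−1)^a/(a!(n−a)!)) [u^n](f(−(n−a+1)u) f(−u)⁻¹ ∏_{w=a−n}^{a} F(wu))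
  = (−1)^n [X^n](f(X) F(X)^{n+1})`. -/
theorem statement2 {A : Type*} [CommRing A] [Algebra ℚ A] (f : PowerSeries A)
    (hf : PowerSeries.constantCoeff f = 1) (n : ℕ)
    (F : PowerSeries A) (hF : F = f * PowerSeries.rescale (-1) f) :
    ∑ a ∈ Finset.range (n + 1),
      ((-1 : ℚ) ^ a / (a.factorial * (n - a).factorial) : ℚ) •
        (PowerSeries.coeff n
          (PowerSeries.rescale (((-(((n : ℤ) - a) + 1)) : ℤ) : A) f *
            Ring.inverse (PowerSeries.rescale (-1) f) *
            ∏ i ∈ Finset.range (n + 1),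
              PowerSeries.rescale ((((a : ℤ) - n + i) : ℤ) : A) F))
      = (-1 : ℚ) ^ n • PowerSeries.coeff n (f * F ^ (n + 1)) :=
  statement2_general f hf n F
end

section
/- Let A be a commutative ℚ-algebra and let f ∈ A[[X]] be a formal power series with constant coefficient 1. Set F(X) := f(X)·f(−X) and G(X) := X·F(X)^{−1}, and let g ∈ A[[X]] be a power series with g(0) = 0 such that G(g(X)) = X (g is the compositional inverse of G). Define Z₃ ∈ A[[X]] by [X^n] Z₃ := ∑_{a=0}^{n} ((−1)^a / (a!·(n−a)!)) · [u^n]( f(−(n−a+1)·u) · f(−u)^{−1} · ∏_{w=a−n}^{a} F(w·u) ) for each n ≥ 0. Then Z₃ = f(−g(X)) · g′(X), where f(−g(X)) denotes the substitution of the power series −g(X) (which has zero constant term) into f, and g′ is the formal derivative of g. -/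
/-- Formal composition `f(g(X))` of power series; it agrees with the usual substitution
whenever `g` has zero constant coefficient (then `coeff n (g^k) = 0` for `k > n`). -/
noncomputable def PowerSeries.comp' {A : Type*} [CommRing A] (f g : PowerSeries A) :
    PowerSeries A :=
  PowerSeries.mk fun n => ∑ k ∈ Finset.range (n + 1),
    PowerSeries.coeff k f * PowerSeries.coeff n (g ^ k)

/-!
Since `G(g) = X` means `g = X·F(g)`, Lagrange inversion gives
`[X^n] f(−g)·g′ = [X^n] f(−X)·F^{n+1} = (−1)^n [X^n] f·F^{n+1}`, using `F(−X) = F(X)`.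

On the other side, the `a`-th summand of `Z₃` is the value at `t = a` of `p(t) := [u^n] E(t, u)`,
where `E(t, u) = f((t−n−1)u) · f(−u)⁻¹ · ∏_{i=0}^{n} F((t+i−n)u)`. Every `u^m`-coefficient of `E`
has `t`-degree at most `m`, and on such series taking the `t^m u^m`-terms is a ring homomorphism,
sending `h((t+c)u)` to `h(u)` and a `t`-free `h(u)` to `h(0)`. So `p` has degree `≤ n` and
`t^n`-coefficient `[u^n] f·F^{n+1}`. The alternating sum is `(−1)^n/n!` times the `n`-th forward
difference of `p` at `0`, which is `(−1)^n` times that coefficient.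
-/

open Finset

namespace PowerSeries

variable {A : Type*} [CommRing A]

theorem coeff_pow_eq_zero_of_lt {g : A⟦X⟧} (hg : constantCoeff g = 0) {n k : ℕ} (h : n < k) :
    coeff n (g ^ k) = 0 := by
  obtain ⟨q, rfl⟩ := X_dvd_iff.mpr hg
  rw [mul_pow, coeff_X_pow_mul', if_neg (by omega)]

theorem comp'_eq_subst {g : A⟦X⟧} (hg : constantCoeff g = 0) (f : A⟦X⟧) :
    f.comp' g = f.subst g := by
  ext n
  rw [comp', coeff_mk, coeff_subst' (HasSubst.of_constantCoeff_zero' hg),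
    finsum_eq_sum_of_support_subset _ (s := range (n + 1))]
  · simp only [smul_eq_mul]
  · intro k hk
    by_contra hkn
    simp only [coe_range, Set.mem_Iio, not_lt] at hkn
    exact hk (by simp only [coeff_pow_eq_zero_of_lt hg (show n < k by omega), smul_zero])

theorem comp'_neg (f g : A⟦X⟧) : f.comp' (-g) = (rescale (-1) f).comp' g := by
  ext n
  have hneg (k : ℕ) : (-g) ^ k = C ((-1 : A) ^ k) * g ^ k := by
    rw [neg_pow, map_pow, map_neg, map_one, mul_comm]
  simp only [comp', coeff_mk, coeff_rescale, hneg, coeff_C_mul]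
  exact sum_congr rfl fun k _ => by ring

@[simp]
theorem constantCoeff_rescale_s3 (a : A) (h : A⟦X⟧) :
    constantCoeff (rescale a h) = constantCoeff h := by
  rw [← coeff_zero_eq_constantCoeff_apply, coeff_rescale]
  simp

theorem constantCoeff_inverse_of_constantCoeff_eq_one {h : A⟦X⟧} (hh : constantCoeff h = 1) :
    constantCoeff (Ring.inverse h) = 1 := by
  have hu : IsUnit h := by simp [isUnit_iff_constantCoeff, hh]
  simpa [hh] using congrArg constantCoeff (Ring.inverse_mul_cancel h hu)

theorem coeff_succ_mul_eq (R W : A⟦X⟧) (n : ℕ) :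
    coeff (n + 1) (R * W) =
      coeff n ((mk fun p => coeff (p + 1) R) * W) + constantCoeff R * coeff (n + 1) W := by
  conv_lhs => rw [eq_X_mul_shift_add_const R]
  rw [add_mul, map_add, mul_assoc, coeff_succ_X_mul, coeff_C_mul]

theorem coeff_pow_mul_derivative_mul (F : A⟦X⟧) (m k : ℕ) :
    coeff k (F ^ m * d⁄dX A F) * (m + 1) = coeff (k + 1) (F ^ (m + 1)) * (k + 1) := by
  have h := congrArg (coeff k) (derivative_pow F (m + 1))
  rw [coeff_derivative, ← map_natCast (C (R := A)), mul_assoc, coeff_C_mul] at h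
  rw [h]
  push_cast
  ring

theorem coeff_pow_mul_sub_X_mul_derivative_mul (F : A⟦X⟧) (m : ℕ) :
    coeff m (F ^ m * (F - X * d⁄dX A F)) * (m + 1) = coeff m (F ^ (m + 1)) := by
  rw [mul_sub, ← pow_succ, mul_left_comm, map_sub]
  cases m with
  | zero => simp
  | succ k =>
    have h := coeff_pow_mul_derivative_mul F (k + 1) k
    rw [coeff_succ_X_mul]
    push_cast at h ⊢
    linear_combination -h

-- `F^m (F − X F') = F^{m+1} − X (F^{m+1})′/(m+1)`, and `[X^m] h′ = (m+1)·[X^{m+1}] h`.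
theorem coeff_succ_pow_mul_sub_X_mul_derivative [Algebra ℚ A] (F : A⟦X⟧) (m : ℕ) :
    coeff (m + 1) (F ^ m * (F - X * d⁄dX A F)) = 0 := by
  have hunit : IsUnit ((m : A) + 1) := by
    simpa using (isUnit_iff_ne_zero.mpr (by positivity : (m : ℚ) + 1 ≠ 0)).map (algebraMap ℚ A)
  rw [mul_sub, ← pow_succ, mul_left_comm, map_sub, coeff_succ_X_mul, sub_eq_zero,
    ← hunit.mul_left_inj, coeff_pow_mul_derivative_mul]

section Lagrange

variable {F g : A⟦X⟧} (hgX : g = X * F.subst g)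
include hgX

theorem subst_eq_X_mul_add_C (R : A⟦X⟧) :
    R.subst g = X * (F * mk fun p => coeff (p + 1) R).subst g + C (constantCoeff R) := by
  have hg : HasSubst g := HasSubst.of_constantCoeff_zero' (by rw [hgX]; simp)
  conv_lhs => rw [eq_X_mul_shift_add_const R]
  rw [subst_add hg, subst_mul hg, subst_mul hg, subst_X hg, subst_C]
  nth_rewrite 1 [hgX]
  rw [mul_assoc]
  rfl

theorem constantCoeff_subst_of_eq_X_mul_subst (R : A⟦X⟧) :
    constantCoeff (R.subst g) = constantCoeff R := by
  rw [subst_eq_X_mul_add_C hgX]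
  simp

variable [Algebra ℚ A]

theorem coeff_succ_subst_of_eq_X_mul_subst (n : ℕ) (R : A⟦X⟧) :
    coeff (n + 1) (R.subst g) = coeff (n + 1) (R * (F ^ n * (F - X * d⁄dX A F))) := by
  induction n generalizing R with
  | zero =>
    rw [subst_eq_X_mul_add_C hgX, map_add, coeff_succ_X_mul, coeff_C, if_neg (Nat.succ_ne_zero _),
      add_zero, coeff_succ_mul_eq, coeff_succ_pow_mul_sub_X_mul_derivative, mul_zero, add_zero,
      coeff_zero_eq_constantCoeff, constantCoeff_subst_of_eq_X_mul_subst hgX]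
    simp [mul_comm]
  | succ n ih =>
    rw [subst_eq_X_mul_add_C hgX, map_add, coeff_succ_X_mul, coeff_C, if_neg (Nat.succ_ne_zero _),
      add_zero, ih, coeff_succ_mul_eq R, coeff_succ_pow_mul_sub_X_mul_derivative, mul_zero,
      add_zero]
    congr 1
    ring

theorem coeff_derivative_of_eq_X_mul_subst (n : ℕ) :
    coeff n (d⁄dX A g) = coeff n (F ^ (n + 1)) := by
  have hcoeff : coeff (n + 1) g = coeff n (F.subst g) := by
    conv_lhs => rw [hgX]
    exact coeff_succ_X_mul n _
  rw [coeff_derivative, hcoeff]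
  cases n with
  | zero => simp [constantCoeff_subst_of_eq_X_mul_subst hgX]
  | succ n =>
    rw [coeff_succ_subst_of_eq_X_mul_subst hgX, ← mul_assoc, ← pow_succ',
      ← coeff_pow_mul_sub_X_mul_derivative_mul]

/-- Lagrange inversion. -/
theorem coeff_subst_mul_derivative_of_eq_X_mul_subst (n : ℕ) (H : A⟦X⟧) :
    coeff n (H.subst g * d⁄dX A g) = coeff n (H * F ^ (n + 1)) := by
  induction n generalizing H with
  | zero =>
    have h := coeff_derivative_of_eq_X_mul_subst hgX 0
    simp only [coeff_zero_eq_constantCoeff_apply, map_mul, zero_add, pow_one] at h ⊢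
    rw [h, constantCoeff_subst_of_eq_X_mul_subst hgX]
  | succ n ih =>
    rw [subst_eq_X_mul_add_C hgX, add_mul, map_add, mul_assoc, coeff_succ_X_mul, ih,
      coeff_C_mul, coeff_derivative_of_eq_X_mul_subst hgX, coeff_succ_mul_eq H]
    congr 2
    ring

end Lagrange

end PowerSeries

theorem neg_one_pow_div_factorial_mul_factorial {a n : ℕ} (ha : a ≤ n) :
    (-1 : ℚ) ^ a / (a.factorial * (n - a).factorial) =
      (-1) ^ n / n.factorial * ((-1) ^ (n - a) * n.choose a) := by
  obtain ⟨b, rfl⟩ := Nat.exists_eq_add_of_le ha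
  rw [Nat.add_sub_cancel_left, Nat.cast_choose ℚ ha, Nat.add_sub_cancel_left]
  have hsq : (-1 : ℚ) ^ (b * 2) = 1 := by rw [pow_mul']; simp
  field_simp
  linear_combination (-(-1 : ℚ) ^ a) * hsq

namespace Polynomial

open fwdDiff

variable {A : Type*} [CommRing A]

theorem fwdDiff_iter_eval_eq_factorial_smul_coeff {p : Polynomial A} {n : ℕ}
    (hp : p.natDegree ≤ n) (x : A) : Δ_[1] ^[n] p.eval x = n.factorial • p.coeff n := by
  have hsplit :
      p.eval = (fun r => ∑ k ∈ range n, p.coeff k * r ^ k) + p.coeff n • fun r => r ^ n := by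
    ext r
    simp [eval_eq_sum_range' (Nat.lt_succ_of_le hp), sum_range_succ]
  rw [hsplit, fwdDiff_iter_add, fwdDiff_iter_const_smul, fwdDiff_iter_sum_mul_pow_eq_zero,
    fwdDiff_iter_eq_factorial]
  simp [mul_comm]

theorem sum_neg_one_pow_div_factorial_smul_eval [Algebra ℚ A] {p : Polynomial A} {n : ℕ}
    (hp : p.natDegree ≤ n) :
    ∑ a ∈ range (n + 1), ((-1 : ℚ) ^ a / (a.factorial * (n - a).factorial)) • p.eval (a : A) =
      (-1) ^ n * p.coeff n := by
  have hnewton := fwdDiff_iter_eq_sum_shift (h := (1 : A)) p.eval n 0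
  simp only [zero_add, nsmul_one] at hnewton
  calc _ = ((-1 : ℚ) ^ n / n.factorial) •
        ∑ a ∈ range (n + 1), ((-1 : ℤ) ^ (n - a) * n.choose a) • p.eval (a : A) := by
        rw [smul_sum]
        refine sum_congr rfl fun a ha => ?_
        rw [neg_one_pow_div_factorial_mul_factorial (Nat.lt_succ_iff.mp (mem_range.mp ha)),
          ← Int.cast_smul_eq_zsmul ℚ, smul_smul]
        push_cast
        rfl
    _ = (-1) ^ n * p.coeff n := by
        rw [← hnewton, fwdDiff_iter_eval_eq_factorial_smul_coeff hp, ← Nat.cast_smul_eq_nsmul ℚ,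
          smul_smul, div_mul_cancel₀ _ (by positivity), Algebra.smul_def]
        simp

end Polynomial

namespace PowerSeries

variable {A : Type*} [CommRing A]

/-- Series `∑ c_{j,m} t^j u^m` in `A[t]⟦u⟧` with `c_{j,m} = 0` for `j > m`. -/
def boundedDegreeSubring (A : Type*) [CommRing A] : Subring (Polynomial A)⟦X⟧ where
  carrier := {h | ∀ m, (coeff m h).natDegree ≤ m}
  one_mem' m := by
    rw [coeff_one]
    split_ifs <;> simp
  zero_mem' m := by simp
  neg_mem' {h} hh m := by simpa using hh m
  add_mem' {h₁ h₂} h₁_mem h₂_mem m := by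
    simpa using Polynomial.natDegree_add_le_of_degree_le (h₁_mem m) (h₂_mem m)
  mul_mem' {h₁ h₂} h₁_mem h₂_mem m := by
    rw [coeff_mul]
    refine Polynomial.natDegree_sum_le_of_forall_le _ _ fun ij hij => ?_
    rw [HasAntidiagonal.mem_antidiagonal] at hij
    exact Polynomial.natDegree_mul_le.trans (hij ▸ add_le_add (h₁_mem ij.1) (h₂_mem ij.2))

theorem natDegree_coeff_le (h : boundedDegreeSubring A) (m : ℕ) :
    (coeff m (h : (Polynomial A)⟦X⟧)).natDegree ≤ m :=
  h.2 m

/-- The `t^m u^m`-terms; multiplicative because a product of two terms reaches the diagonal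
only if both factors lie on it. -/
noncomputable def diagonalHom : boundedDegreeSubring A →+* A⟦X⟧ where
  toFun h := mk fun m => (coeff m (h : (Polynomial A)⟦X⟧)).coeff m
  map_one' := by
    ext m
    simp only [OneMemClass.coe_one, coeff_mk, coeff_one]
    split_ifs with hm <;> simp [hm]
  map_zero' := by ext; simp
  map_add' h₁ h₂ := by ext; simp
  map_mul' h₁ h₂ := by
    ext m
    simp only [Subring.coe_mul, coeff_mk, coeff_mul, Polynomial.finsetSum_coeff]
    refine sum_congr rfl fun ij hij => ?_
    rw [HasAntidiagonal.mem_antidiagonal] at hij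
    subst hij
    exact Polynomial.coeff_mul_add_eq_of_natDegree_le (h₁.2 ij.1) (h₂.2 ij.2)

theorem coeff_diagonalHom (h : boundedDegreeSubring A) (m : ℕ) :
    coeff m (diagonalHom h) = (coeff m (h : (Polynomial A)⟦X⟧)).coeff m := by
  simp [diagonalHom]

theorem rescale_map_C_mem {r : Polynomial A} (hr : r.natDegree ≤ 1) (h : A⟦X⟧) :
    rescale r (map Polynomial.C h) ∈ boundedDegreeSubring A := fun m => by
  rw [coeff_rescale, coeff_map]
  exact (Polynomial.natDegree_mul_C_le _ _).trans
    ((Polynomial.natDegree_pow_le_of_le m hr).trans (mul_one m).le)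

theorem diagonalHom_rescale_map_C {r : Polynomial A} (hr : r.natDegree ≤ 1) (h : A⟦X⟧) :
    diagonalHom ⟨_, rescale_map_C_mem hr h⟩ = rescale (r.coeff 1) h := by
  ext m
  rw [coeff_diagonalHom, coeff_rescale, coeff_rescale, coeff_map, Polynomial.coeff_mul_C,
    ← Polynomial.coeff_pow_of_natDegree_le hr, mul_one]

theorem map_eval_rescale_map_C (a : A) (r : Polynomial A) (h : A⟦X⟧) :
    map (Polynomial.evalRingHom a) (rescale r (map Polynomial.C h)) = rescale (r.eval a) h := by
  ext m
  simp [coeff_rescale]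

theorem sum_smul_coeff_map_eval [Algebra ℚ A] (E : boundedDegreeSubring A) (n : ℕ) :
    ∑ a ∈ range (n + 1), ((-1 : ℚ) ^ a / (a.factorial * (n - a).factorial)) •
        coeff n (map (Polynomial.evalRingHom (a : A)) (E : (Polynomial A)⟦X⟧)) =
      (-1) ^ n * coeff n (diagonalHom E) := by
  simp only [coeff_map, Polynomial.coe_evalRingHom, coeff_diagonalHom]
  exact Polynomial.sum_neg_one_pow_div_factorial_smul_eval (natDegree_coeff_le E n)

theorem sum_smul_coeff_rescale_mul_prod_rescale [Algebra ℚ A] {f : A⟦X⟧}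
    (hf : constantCoeff f = 1) (F : A⟦X⟧) (n : ℕ) :
    ∑ a ∈ range (n + 1), ((-1 : ℚ) ^ a / (a.factorial * (n - a).factorial) : ℚ) •
        coeff n (rescale (((-(((n : ℤ) - a) + 1)) : ℤ) : A) f * Ring.inverse (rescale (-1) f) *
          ∏ i ∈ range (n + 1), rescale ((((a : ℤ) - n + i) : ℤ) : A) F) =
      (-1) ^ n * coeff n (f * F ^ (n + 1)) := by
  have hlin (c : A) : (Polynomial.X + Polynomial.C c).natDegree ≤ 1 :=
    Polynomial.natDegree_add_le_of_degree_le Polynomial.natDegree_X_le (by simp)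
  have hone : (1 : Polynomial A).natDegree ≤ 1 := by simp
  let E : boundedDegreeSubring A :=
    ⟨_, rescale_map_C_mem (hlin (-((n : A) + 1))) f⟩ *
      ⟨_, rescale_map_C_mem hone (Ring.inverse (rescale (-1) f))⟩ *
      ∏ i ∈ range (n + 1), ⟨_, rescale_map_C_mem (hlin ((i : A) - n)) F⟩
  have hdiag : diagonalHom E = f * F ^ (n + 1) := by
    simp only [E]
    rw [map_mul, map_mul, map_prod]
    simp only [diagonalHom_rescale_map_C (hlin _), diagonalHom_rescale_map_C hone]
    simp [Polynomial.coeff_one, constantCoeff_inverse_of_constantCoeff_eq_one, hf]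
  have heval (a : ℕ) : map (Polynomial.evalRingHom (a : A)) (E : (Polynomial A)⟦X⟧) =
      rescale (((-(((n : ℤ) - a) + 1)) : ℤ) : A) f * Ring.inverse (rescale (-1) f) *
        ∏ i ∈ range (n + 1), rescale ((((a : ℤ) - n + i) : ℤ) : A) F := by
    simp only [E, Subring.coe_mul, SubmonoidClass.coe_finsetProd, map_mul, map_prod,
      map_eval_rescale_map_C]
    simp only [Polynomial.eval_add, Polynomial.eval_X, Polynomial.eval_C, Polynomial.eval_one,
      rescale_one, RingHom.id_apply]
    push_cast
    ring_nf
  simp_rw [← heval, sum_smul_coeff_map_eval, hdiag]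

end PowerSeries

/-- Lemma 3 of the paper: with `F(X) = f(X)f(−X)`, `G(X) = X·F(X)⁻¹` and `g`
the compositional inverse of `G`, the series `Z₃` with
`[X^n] Z₃ = ∑_{a=0}^{n} ((−1)^a/(a!(n−a)!)) [u^n](f(−(n−a+1)u) f(−u)⁻¹ ∏_{w=a−n}^{a} F(wu))`
equals `f(−g(X))·g′(X)`. -/
theorem statement3 {A : Type*} [CommRing A] [Algebra ℚ A] (f : PowerSeries A)
    (hf : PowerSeries.constantCoeff f = 1)
    (F G g : PowerSeries A)
    (hF : F = f * PowerSeries.rescale (-1) f)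
    (hG : G = PowerSeries.X * Ring.inverse F)
    (hg0 : PowerSeries.constantCoeff g = 0)
    (hg : PowerSeries.comp' G g = PowerSeries.X)
    (Z₃ : PowerSeries A)
    (hZ : ∀ n : ℕ, PowerSeries.coeff n Z₃ =
      ∑ a ∈ Finset.range (n + 1),
        ((-1 : ℚ) ^ a / (a.factorial * (n - a).factorial) : ℚ) •
          (PowerSeries.coeff n
            (PowerSeries.rescale (((-(((n : ℤ) - a) + 1)) : ℤ) : A) f *
              Ring.inverse (PowerSeries.rescale (-1) f) *
              ∏ i ∈ Finset.range (n + 1),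
                PowerSeries.rescale ((((a : ℤ) - n + i) : ℤ) : A) F))) :
    Z₃ = PowerSeries.comp' f (-g) * PowerSeries.derivativeFun g := by
  open PowerSeries in
  have hF0 : constantCoeff F = 1 := by simp [hF, hf]
  have hGF : G * F = X := by
    rw [hG, mul_assoc, Ring.inverse_mul_cancel _ (by simp [isUnit_iff_constantCoeff, hF0]),
      mul_one]
  have hsubst : HasSubst g := HasSubst.of_constantCoeff_zero' hg0
  have hgX : g = X * F.subst g := by
    rw [comp'_eq_subst hg0] at hg
    rw [← hg, ← subst_mul hsubst, hGF, subst_X hsubst]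
  have hFsymm : rescale (-1) F = F := by
    rw [hF, map_mul, rescale_rescale]
    simp [mul_comm]
  ext n
  change _ = coeff n (f.comp' (-g) * d⁄dX A g)
  rw [hZ n, sum_smul_coeff_rescale_mul_prod_rescale hf, comp'_neg, comp'_eq_subst hg0,
    coeff_subst_mul_derivative_of_eq_X_mul_subst hgX]
  conv_rhs => rw [← hFsymm, ← map_pow, ← map_mul, coeff_rescale]
end

section
/- Let A := ℚ[ε] be the ring of dual numbers over ℚ (so ε² = 0). In A[[X]], let exp X := ∑_{k≥0} X^k/k!, cosh X := (exp X + exp(−X))/2, and set f := 1 + ε·(exp X − 1) and g := X + 2ε·X·(cosh X − 1). Working in the two-variable power series ring A[[x,y]], let g(x) and g(y) denote the images of g under X ↦ x and X ↦ y, and let f(g(x)−g(y)) and f(g(y)−g(x)) denote the substitutions of the two-variable power series g(x)−g(y), respectively g(y)−g(x) (both with zero constant term), into f. Then (x − y) · f(g(x) − g(y)) · f(g(y) − g(x)) = (g(x) − g(y)) + 2ε·( (x − y)·cosh(x − y) − (x·cosh x − y·cosh y) ), where cosh(x−y) denotes the substitution of x − y into cosh X, and cosh x, cosh y the images of cosh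 X under X ↦ x, X ↦ y. -/
/-!
Since `ε² = 0`, substituting into `f = 1 + ε(exp X − 1)` only sees the argument modulo `ε`,
and `g(x) − g(y) ≡ x − y (mod ε)`. Hence
`f(g(x) − g(y)) f(g(y) − g(x)) = 1 + ε(exp(x − y) + exp(y − x) − 2) = 1 + 2ε(cosh(x − y) − 1)`,
and expanding `g(x) − g(y) = x − y + 2ε(x(cosh x − 1) − y(cosh y − 1))` gives the identity.
On series without constant term the truncated sum `substMv` agrees with `PowerSeries.subst`,
which supplies the ring-homomorphism properties of substitution.
-/

/-- Substitution of a two-variable power series `g` (intended with zero constant term)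
into a one-variable power series `f`: the coefficient of a monomial `d` in `f(g)` is
`∑_{k ≤ |d|} f_k · [d](g^k)`, which is the usual substitution since `[d](g^k) = 0` for
`k > |d|` when `g` has zero constant term. -/
noncomputable def PowerSeries.substMv {A : Type*} [CommRing A] (f : PowerSeries A)
    (g : MvPowerSeries (Fin 2) A) : MvPowerSeries (Fin 2) A :=
  fun d => ∑ k ∈ Finset.range (d.sum (fun _ n => n) + 1),
    PowerSeries.coeff k f * MvPowerSeries.coeff d (g ^ k)

theorem MvPowerSeries.coeff_pow_eq_zero_of_degree_lt {σ A : Type*} [CommRing A]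
    {g : MvPowerSeries σ A} (hg : constantCoeff g = 0) {k : ℕ} {d : σ →₀ ℕ}
    (h : d.degree < k) : coeff d (g ^ k) = 0 :=
  coeff_of_lt_order ((Nat.cast_lt.mpr h).trans_le (le_order_pow_of_constantCoeff_eq_zero k hg))

theorem mul_pow_eq_mul_pow_of_mul_sub_eq_zero {R : Type*} [CommRing R] {c a b : R}
    (h : c * (a - b) = 0) (k : ℕ) : c * a ^ k = c * b ^ k := by
  obtain ⟨t, ht⟩ := sub_dvd_pow_sub_pow a b k
  rw [← sub_eq_zero, ← mul_sub, ht, ← mul_assoc, h, zero_mul]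

namespace PowerSeries

open Finset

variable {A : Type*} [CommRing A]

theorem coeff_substMv (f : A⟦X⟧) (g : MvPowerSeries (Fin 2) A) (d : Fin 2 →₀ ℕ) :
    MvPowerSeries.coeff d (f.substMv g) =
      ∑ k ∈ range (d.degree + 1), coeff k f * MvPowerSeries.coeff d (g ^ k) := rfl

theorem substMv_eq_subst {g : MvPowerSeries (Fin 2) A} (hg : g.constantCoeff = 0)
    (f : A⟦X⟧) : f.substMv g = f.subst g := by
  ext d
  rw [coeff_subst (HasSubst.of_constantCoeff_zero hg),
    finsum_eq_sum_of_support_subset (s := range (d.degree + 1))]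
  · rfl
  · intro k hk
    rw [coe_range, Set.mem_Iio, Nat.lt_succ_iff]
    by_contra! hdk
    exact hk (by simp only [MvPowerSeries.coeff_pow_eq_zero_of_degree_lt hg hdk, smul_zero])

theorem substMv_rescale (r : A) (f : A⟦X⟧) (g : MvPowerSeries (Fin 2) A) :
    (rescale r f).substMv g = f.substMv (r • g) := by
  ext d
  rw [coeff_substMv, coeff_substMv]
  refine sum_congr rfl fun k _ => ?_
  rw [coeff_rescale, smul_pow, MvPowerSeries.coeff_smul]
  ring

theorem C_mul_substMv_eq_of_C_mul_sub_eq_zero {a b : MvPowerSeries (Fin 2) A} {c : A}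
    (h : MvPowerSeries.C c * (a - b) = 0) (f : A⟦X⟧) :
    MvPowerSeries.C c * f.substMv a = MvPowerSeries.C c * f.substMv b := by
  ext d
  simp only [MvPowerSeries.coeff_C_mul, coeff_substMv, mul_sum, mul_left_comm c]
  refine sum_congr rfl fun k _ => congrArg _ ?_
  simpa only [MvPowerSeries.coeff_C_mul] using
    congrArg (MvPowerSeries.coeff d) (mul_pow_eq_mul_pow_of_mul_sub_eq_zero h k)

end PowerSeries

open PowerSeries

/-- over the dual numbers `A = ℚ[ε]`, with `f = 1 + ε(exp X − 1)` and
`g = X + 2εX(cosh X − 1)`, one has, in `A[[x, y]]`,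
`(x − y)·f(g(x) − g(y))·f(g(y) − g(x))
  = (g(x) − g(y)) + 2ε((x − y)·cosh(x − y) − (x·cosh x − y·cosh y))`. -/
theorem statement9 :
    let A := DualNumber ℚ
    let E : PowerSeries A := PowerSeries.exp A
    let cosh : PowerSeries A := (1 / 2 : ℚ) • (E + PowerSeries.rescale (-1) E)
    let f : PowerSeries A := 1 + PowerSeries.C (R := A) DualNumber.eps * (E - 1)
    let g : PowerSeries A :=
      PowerSeries.X + 2 * PowerSeries.C (R := A) DualNumber.eps * PowerSeries.X * (cosh - 1)
    let x : MvPowerSeries (Fin 2) A := MvPowerSeries.X 0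
    let y : MvPowerSeries (Fin 2) A := MvPowerSeries.X 1
    let gx : MvPowerSeries (Fin 2) A := PowerSeries.substMv g x
    let gy : MvPowerSeries (Fin 2) A := PowerSeries.substMv g y
    (x - y) * PowerSeries.substMv f (gx - gy) * PowerSeries.substMv f (gy - gx)
      = (gx - gy) +
          2 * MvPowerSeries.C (σ := Fin 2) (R := A) DualNumber.eps *
            ((x - y) * PowerSeries.substMv cosh (x - y) -
              (x * PowerSeries.substMv cosh x - y * PowerSeries.substMv cosh y)) := by
  intro A E cosh f g x y gx gy
  set ε : MvPowerSeries (Fin 2) A := MvPowerSeries.C DualNumber.eps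
  have hεε : ε * ε = 0 := by rw [← map_mul, DualNumber.eps_mul_eps, map_zero]
  have hg (a : MvPowerSeries (Fin 2) A) (ha : a.constantCoeff = 0) :
      g.substMv a = a + 2 * ε * a * (cosh.substMv a - 1) := by
    rw [substMv_eq_subst ha, substMv_eq_subst ha,
      ← coe_substAlgHom (HasSubst.of_constantCoeff_zero ha)]
    simp only [g, two_mul, map_add, map_mul, map_sub, map_one, substAlgHom_X]
    simp only [coe_substAlgHom, subst_C, ε]
  have hf (a : MvPowerSeries (Fin 2) A) (ha : a.constantCoeff = 0) :
      f.substMv a = 1 + ε * (E.substMv a - 1) := by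
    rw [substMv_eq_subst ha, substMv_eq_subst ha,
      ← coe_substAlgHom (HasSubst.of_constantCoeff_zero ha)]
    simp only [f, map_add, map_mul, map_sub, map_one]
    simp only [coe_substAlgHom, subst_C, ε]
  have hx : x.constantCoeff = 0 := MvPowerSeries.constantCoeff_X 0
  have hy : y.constantCoeff = 0 := MvPowerSeries.constantCoeff_X 1
  have hgx : gx = x + 2 * ε * x * (cosh.substMv x - 1) := hg x hx
  have hgy : gy = y + 2 * ε * y * (cosh.substMv y - 1) := hg y hy
  have hgxy : (gx - gy).constantCoeff = 0 := by simp [hgx, hgy, hx, hy]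
  have hgyx : (gy - gx).constantCoeff = 0 := by simp [hgx, hgy, hx, hy]
  have hεa : ε * E.substMv (gx - gy) = ε * E.substMv (x - y) := by
    refine C_mul_substMv_eq_of_C_mul_sub_eq_zero ?_ E
    rw [hgx, hgy]
    linear_combination (2 * x * (cosh.substMv x - 1) - 2 * y * (cosh.substMv y - 1)) * hεε
  have hεb : ε * E.substMv (gy - gx) = ε * E.substMv (-(x - y)) := by
    refine C_mul_substMv_eq_of_C_mul_sub_eq_zero ?_ E
    rw [hgx, hgy]
    linear_combination (2 * y * (cosh.substMv y - 1) - 2 * x * (cosh.substMv x - 1)) * hεε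
  have hcosh : E.substMv (x - y) + E.substMv (-(x - y)) = 2 * cosh.substMv (x - y) := by
    have hxy : (x - y).constantCoeff = 0 := by simp [hx, hy]
    have hs := HasSubst.of_constantCoeff_zero hxy
    rw [← neg_one_smul A (x - y), ← substMv_rescale, substMv_eq_subst hxy,
      substMv_eq_subst hxy, substMv_eq_subst hxy, subst_smul hs, subst_add hs, two_mul,
      ← add_smul]
    norm_num
  rw [hf _ hgxy, hf _ hgyx]
  linear_combination hgy - hgx + (x - y) * hεa + (x - y) * hεb + (x - y) * ε * hcosh
    + ((x - y) * (E.substMv (gx - gy) - 1) * (E.substMv (gy - gx) - 1)) * hεε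
end
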